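/- arXiv:math/0409129 — 2 statements merged into one kernel-verified Lean document; each statement's English description precedes it below -/
import Mathlib

section
/- Let k be a field of characteristic zero, let n ≥ 2 and 2 ≤ r ≤ n, and let p_1, …, p_r ∈ k^{n+1} be linearly independent vectors. Then the k-vector space of homogeneous polynomials Q of degree 2 in k[x_0, …, x_n] such that all first-order partial derivatives of Q vanish at each p_i has dimension binomial(n−r+2, 2); moreover binomial(n−r+2, 2) = binomial(n+2, 2) − r(n+1) + r(r−1)/2, so this dimension exceeds the expected count binomial(n+2, 2) − r(n+1) by exactly r(r−1)/2 > 0. (This is the speciality of the Alexander–Hirschowitz case (d, n, r) = (2, n, r) with 2 ≤ r ≤ n.) -/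
/-!
An invertible linear change of coordinates, `Q(x) ↦ Q(M x)`, preserves quadrics and, by the chain
rule, singularity; so it identifies the quadrics singular at the independent points `p i` with
those singular at basis vectors `e_c`, `c ∈ S`, `#S = r`. In characteristic zero a quadric is
singular at `e_c` iff the variable `X c` occurs in none of its monomials, so the latter space is
spanned by the quadratic monomials in the remaining `n + 1 - r` variables.
-/

open MvPolynomial

/-- The space of homogeneous quadrics all of whose first-order partial derivatives
vanish at each of the given points. -/
noncomputable def quadricsSingularAtPoints (k : Type*) [Field k] (n r : ℕ)
    (p : Fin r → (Fin (n + 1) → k)) : Submodule k (MvPolynomial (Fin (n + 1)) k) :=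
  homogeneousSubmodule (Fin (n + 1)) k 2 ⊓
    ⨅ (i : Fin r) (j : Fin (n + 1)),
      LinearMap.ker ((aeval (p i)).toLinearMap ∘ₗ (pderiv j).toLinearMap)

open Matrix Module

lemma Finsupp.exists_eq_single_add_single_of_degree_eq_two {σ : Type*} {d : σ →₀ ℕ}
    (hd : d.degree = 2) : ∃ a b, d = single a 1 + single b 1 := by
  classical
  obtain ⟨a, b, hab⟩ := Multiset.card_eq_two.mp (d.card_toMultiset.trans hd)
  refine ⟨a, b, ?_⟩
  rw [Finsupp.toMultiset_eq_iff.mp hab, Multiset.insert_eq_cons, ← Multiset.singleton_add,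
    Multiset.toFinsupp_add, Multiset.toFinsupp_singleton, Multiset.toFinsupp_singleton]

@[simp] lemma Module.Basis.sumExtend_apply_inl {k V ι : Type*} [Field k] [AddCommGroup V]
    [Module k V] {p : ι → V} (hp : LinearIndependent k p) (i : ι) :
    Basis.sumExtend hp (Sum.inl i) = p i := by
  simp only [Basis.sumExtend, Basis.coe_reindex, Basis.coe_extend, Function.comp_apply]
  rfl

lemma LinearIndependent.exists_basis_apply_eq {k V ι σ : Type*} [Field k] [AddCommGroup V]
    [Module k V] [FiniteDimensional k V] [Fintype σ] (hσ : finrank k V = Fintype.card σ)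
    {p : ι → V} (hp : LinearIndependent k p) :
    ∃ (b : Basis σ k V) (e : ι ↪ σ), ∀ i, b (e i) = p i := by
  let b := Basis.sumExtend hp
  have := FiniteDimensional.fintypeBasisIndex b
  let e := Fintype.equivOfCardEq ((finrank_eq_card_basis b).symm.trans hσ)
  exact ⟨b.reindex e, ⟨e ∘ Sum.inl, e.injective.comp Sum.inl_injective⟩,
    fun i => by simp [b]⟩

namespace MvPolynomial

section LinearSubst

variable {σ R : Type*} [Fintype σ] [CommSemiring R]

noncomputable def linearSubst (M : Matrix σ σ R) : MvPolynomial σ R →ₐ[R] MvPolynomial σ R :=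
  aeval fun i => ∑ j, C (M i j) * X j

@[simp] lemma linearSubst_X (M : Matrix σ σ R) (i : σ) :
    linearSubst M (X i) = ∑ j, C (M i j) * X j :=
  aeval_X _ _

lemma eval_linearSubst (M : Matrix σ σ R) (x : σ → R) (Q : MvPolynomial σ R) :
    eval x (linearSubst M Q) = eval (M *ᵥ x) Q := by
  change aeval x (aeval _ Q) = aeval (M *ᵥ x) Q
  rw [comp_aeval_apply]
  congr 1
  ext i
  simp [mulVec, dotProduct]

lemma linearSubst_mul (M N : Matrix σ σ R) :
    linearSubst (M * N) = (linearSubst N).comp (linearSubst M) := by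
  refine algHom_ext fun i => ?_
  simp only [linearSubst_X, AlgHom.comp_apply, map_sum, map_mul, algHom_C, mul_apply,
    Finset.mul_sum, Finset.sum_mul]
  rw [Finset.sum_comm]
  simp [← mul_assoc]

@[simp] lemma linearSubst_one [DecidableEq σ] :
    linearSubst (1 : Matrix σ σ R) = AlgHom.id R _ := by
  refine algHom_ext fun i => ?_
  simp [one_apply, apply_ite C, ite_mul]

noncomputable def linearSubstEquiv [DecidableEq σ] (M : (Matrix σ σ R)ˣ) :
    MvPolynomial σ R ≃ₐ[R] MvPolynomial σ R :=
  AlgEquiv.ofAlgHom (linearSubst M) (linearSubst ↑M⁻¹)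
    (by rw [← linearSubst_mul, Units.inv_mul, linearSubst_one])
    (by rw [← linearSubst_mul, Units.mul_inv, linearSubst_one])

@[simp] lemma linearSubstEquiv_apply [DecidableEq σ] (M : (Matrix σ σ R)ˣ)
    (Q : MvPolynomial σ R) : linearSubstEquiv M Q = linearSubst M Q :=
  rfl

lemma pderiv_linearSubst (M : Matrix σ σ R) (j : σ) (Q : MvPolynomial σ R) :
    pderiv j (linearSubst M Q) = ∑ l, C (M l j) * linearSubst M (pderiv l Q) := by
  classical
  induction Q using MvPolynomial.induction_on with
  | C a => simp [linearSubst]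
  | add p q hp hq => simp only [map_add, hp, hq, mul_add, Finset.sum_add_distrib]
  | mul_X p s hp =>
    have hX : pderiv j (linearSubst M (X s)) = C (M s j) := by
      simp [pderiv_X, Pi.single_apply]
    rw [map_mul, pderiv_mul, hp, hX]
    simp only [pderiv_mul, pderiv_X, map_add, map_mul, mul_add, Finset.sum_add_distrib,
      Finset.sum_mul, Pi.single_apply, apply_ite (linearSubst M), map_zero, mul_ite, mul_one,
      mul_zero, Finset.sum_ite_eq, Finset.mem_univ, if_true, mul_assoc]
    ring

lemma eval_pderiv_linearSubst (M : Matrix σ σ R) (x : σ → R) (Q : MvPolynomial σ R) :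
    (fun j => eval x (pderiv j (linearSubst M Q))) =
      (fun l => eval (M *ᵥ x) (pderiv l Q)) ᵥ* M := by
  ext j
  simp [pderiv_linearSubst, eval_linearSubst, vecMul, dotProduct, mul_comm]

lemma IsHomogeneous.linearSubst {Q : MvPolynomial σ R} {n : ℕ} (hQ : Q.IsHomogeneous n)
    (M : Matrix σ σ R) : (linearSubst M Q).IsHomogeneous n := by
  have h := hQ.aeval (n := 1) (fun i => ∑ j, C (M i j) * X j) fun i =>
    IsHomogeneous.sum _ _ _ fun j _ => isHomogeneous_C_mul_X (M i j) j
  rwa [one_mul] at h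

variable [DecidableEq σ]

lemma isHomogeneous_linearSubst_iff (M : (Matrix σ σ R)ˣ) {Q : MvPolynomial σ R} {n : ℕ} :
    (linearSubst ↑M Q).IsHomogeneous n ↔ Q.IsHomogeneous n := by
  refine ⟨fun h => ?_, fun h => h.linearSubst _⟩
  have h' := h.linearSubst ↑M⁻¹
  rwa [← AlgHom.comp_apply, ← linearSubst_mul, Units.mul_inv, linearSubst_one,
    AlgHom.id_apply] at h'

lemma forall_eval_pderiv_linearSubst_eq_zero_iff (M : (Matrix σ σ R)ˣ) (x : σ → R)
    (Q : MvPolynomial σ R) :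
    (∀ j, eval x (pderiv j (linearSubst ↑M Q)) = 0) ↔ ∀ l, eval (↑M *ᵥ x) (pderiv l Q) = 0 := by
  have h := (vecMul_injective_of_isUnit M.isUnit).eq_iff
    (a := fun l => eval (↑M *ᵥ x) (pderiv l Q)) (b := 0)
  rw [zero_vecMul, ← eval_pderiv_linearSubst] at h
  simpa only [_root_.funext_iff, Pi.zero_apply] using h

end LinearSubst

section SingularAtBasisVector

variable {σ : Type*} [DecidableEq σ]

lemma IsHomogeneous.eval_single_one {R : Type*} [CommSemiring R] {P : MvPolynomial σ R} {n : ℕ}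
    (hP : P.IsHomogeneous n) (c : σ) :
    eval (Pi.single c 1) P = coeff (Finsupp.single c n) P := by
  conv_lhs => rw [P.as_sum]
  rw [map_sum, Finset.sum_eq_single (Finsupp.single c n)]
  · simp [eval_monomial]
  · intro d hd hne
    obtain ⟨i, hi, hic⟩ : ∃ i ∈ d.support, i ≠ c := by
      by_contra! h
      have hdc : d = Finsupp.single c (d c) :=
        Finsupp.support_subset_singleton.mp fun i hi => Finset.mem_singleton.mpr (h i hi)
      have hdeg : d.degree = n := (hP.degree_eq_sum_deg_support hd).symm
      rw [hdc, Finsupp.degree_single] at hdeg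
      exact hne (hdeg ▸ hdc)
    rw [eval_monomial, Finsupp.prod, Finset.prod_eq_zero hi, mul_zero]
    simp [Pi.single_eq_of_ne hic, Finsupp.mem_support_iff.mp hi]
  · intro h
    rw [notMem_support_iff.mp h, monomial_zero, map_zero]

lemma IsHomogeneous.eval_single_one_pderiv {R : Type*} [CommSemiring R] {Q : MvPolynomial σ R}
    (hQ : Q.IsHomogeneous 2) (c j : σ) :
    eval (Pi.single c 1) (pderiv j Q) =
      coeff (Finsupp.single c 1 + Finsupp.single j 1) Q * ((Finsupp.single c 1 j : ℕ) + 1) := by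
  rw [(hQ.pderiv : (pderiv j Q).IsHomogeneous 1).eval_single_one, coeff_pderiv]

/-- `∂_j Q (e_c)` is the coefficient of `X c * X j` in `Q` times `1` or `2`, hence nonzero
exactly when that monomial occurs. -/
lemma IsHomogeneous.forall_eval_single_one_pderiv_eq_zero_iff {k : Type*} [Field k] [CharZero k]
    {Q : MvPolynomial σ k} (hQ : Q.IsHomogeneous 2) (c : σ) :
    (∀ j, eval (Pi.single c 1) (pderiv j Q) = 0) ↔ ∀ d ∈ Q.support, d c = 0 := by
  simp only [hQ.eval_single_one_pderiv, mul_eq_zero, Nat.cast_add_one_ne_zero, or_false]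
  constructor
  · intro h d hd
    obtain ⟨a, b, rfl⟩ := Finsupp.exists_eq_single_add_single_of_degree_eq_two
      (hQ.degree_eq_sum_deg_support hd).symm
    by_contra hc
    obtain rfl | rfl : c = a ∨ c = b := by
      by_contra! hne
      simp [hne.1.symm, hne.2.symm] at hc
    · exact mem_support_iff.mp hd (h b)
    · exact mem_support_iff.mp hd (add_comm (Finsupp.single a 1) _ ▸ h a)
  · intro h j
    by_contra hj
    simpa using h _ (mem_support_iff.mpr hj)

end SingularAtBasisVector

end MvPolynomial

section QuadricsSingularAtPoints

variable {k : Type*} [Field k] {n r : ℕ}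

lemma mem_quadricsSingularAtPoints {p : Fin r → Fin (n + 1) → k}
    {Q : MvPolynomial (Fin (n + 1)) k} :
    Q ∈ quadricsSingularAtPoints k n r p ↔
      Q.IsHomogeneous 2 ∧ ∀ i j, eval (p i) (pderiv j Q) = 0 := by
  simp [quadricsSingularAtPoints, Submodule.mem_iInf]

lemma linearSubst_mem_quadricsSingularAtPoints_iff (M : (Matrix (Fin (n + 1)) (Fin (n + 1)) k)ˣ)
    (p : Fin r → Fin (n + 1) → k) (Q : MvPolynomial (Fin (n + 1)) k) :
    linearSubst ↑M Q ∈ quadricsSingularAtPoints k n r p ↔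
      Q ∈ quadricsSingularAtPoints k n r fun i => ↑M *ᵥ p i := by
  simp only [mem_quadricsSingularAtPoints, isHomogeneous_linearSubst_iff,
    forall_eval_pderiv_linearSubst_eq_zero_iff]

lemma finrank_quadricsSingularAtPoints_mulVec (M : (Matrix (Fin (n + 1)) (Fin (n + 1)) k)ˣ)
    (p : Fin r → Fin (n + 1) → k) :
    finrank k (quadricsSingularAtPoints k n r fun i => ↑M *ᵥ p i) =
      finrank k (quadricsSingularAtPoints k n r p) := by
  have h : (quadricsSingularAtPoints k n r fun i => ↑M *ᵥ p i) =
      (quadricsSingularAtPoints k n r p).comap (linearSubstEquiv M).toLinearEquiv.toLinearMap := by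
    ext Q
    simp [linearSubst_mem_quadricsSingularAtPoints_iff]
  rw [h, Submodule.comap_equiv_eq_map_symm, LinearEquiv.finrank_map_eq]

lemma quadricsSingularAtPoints_single_one [CharZero k] (e : Fin r ↪ Fin (n + 1)) :
    quadricsSingularAtPoints k n r (fun i => Pi.single (e i) 1) =
      restrictSupport k ↑((Finset.univ.map e)ᶜ.finsuppAntidiag 2) := by
  ext Q
  rw [mem_quadricsSingularAtPoints, mem_restrictSupport_iff, Finset.coe_subset]
  constructor
  · rintro ⟨hQ, hsing⟩ d hd
    refine Finset.mem_finsuppAntidiag'.mpr ⟨(hQ.degree_eq_sum_deg_support hd).symm, ?_⟩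
    intro c hc
    simp only [Finset.mem_compl, Finset.mem_map, Finset.mem_univ, true_and, not_exists]
    rintro i rfl
    exact Finsupp.mem_support_iff.mp hc
      ((hQ.forall_eval_single_one_pderiv_eq_zero_iff (e i)).mp (hsing i) d hd)
  · intro h
    have hQ : Q.IsHomogeneous 2 := by
      rw [← mem_homogeneousSubmodule, homogeneousSubmodule_eq_finsupp_supported]
      refine restrictSupport_mono k (fun d hd => ?_) ((mem_restrictSupport_iff k).mpr
        (Finset.coe_subset.mpr h))
      exact (Finset.mem_finsuppAntidiag'.mp hd).1
    refine ⟨hQ, fun i => (hQ.forall_eval_single_one_pderiv_eq_zero_iff (e i)).mpr fun d hd => ?_⟩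
    by_contra hdi
    have := (Finset.mem_finsuppAntidiag'.mp (h hd)).2 (Finsupp.mem_support_iff.mpr hdi)
    simp at this

lemma finrank_quadricsSingularAtPoints_single_one [CharZero k] (e : Fin r ↪ Fin (n + 1)) :
    finrank k (quadricsSingularAtPoints k n r fun i => Pi.single (e i) 1) =
      (n + 1 - r + 1).choose 2 := by
  rw [quadricsSingularAtPoints_single_one, finrank_eq_nat_card_basis (basisRestrictSupport k _),
    Nat.card_coe_set_eq, Set.ncard_coe_finset, Finset.card_finsuppAntidiag_nat_eq_choose,
    Finset.card_compl, Finset.card_map, Finset.card_univ, Fintype.card_fin, Fintype.card_fin]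
  rfl

theorem finrank_quadricsSingularAtPoints [CharZero k] {p : Fin r → Fin (n + 1) → k}
    (hp : LinearIndependent k p) :
    finrank k (quadricsSingularAtPoints k n r p) = (n + 1 - r + 1).choose 2 := by
  obtain ⟨b, e, hbe⟩ := hp.exists_basis_apply_eq (σ := Fin (n + 1)) (by simp)
  have := (Pi.basisFun k (Fin (n + 1))).invertibleToMatrix b
  let M := unitOfInvertible ((Pi.basisFun k (Fin (n + 1))).toMatrix b)
  have hp_eq : p = fun i => ↑M *ᵥ Pi.single (e i) 1 := by
    ext i j
    simp [M, ← hbe, Basis.toMatrix_apply]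
  rw [hp_eq, finrank_quadricsSingularAtPoints_mulVec, finrank_quadricsSingularAtPoints_single_one]

end QuadricsSingularAtPoints

lemma two_mul_natCast_choose_two (m : ℕ) : (2 * m.choose 2 : ℤ) = m * (m - 1) := by
  have h : (2 * m.choose 2 : ℚ) = m * (m - 1) := by
    rw [Nat.cast_choose_two]
    ring
  exact_mod_cast h

lemma natCast_choose_sub_add_two {n r : ℕ} (hrn : r ≤ n) :
    ((n - r + 2).choose 2 : ℤ) = (n + 2).choose 2 - r * (n + 1) + r.choose 2 := by
  have h₁ := two_mul_natCast_choose_two (n - r + 2)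
  have h₂ := two_mul_natCast_choose_two (n + 2)
  have h₃ := two_mul_natCast_choose_two r
  push_cast [Nat.cast_sub hrn] at h₁ h₂
  linarith

theorem stmt0_general (k : Type*) [Field k] [CharZero k] (n r : ℕ)
    (hr : 2 ≤ r) (hrn : r ≤ n)
    (p : Fin r → (Fin (n + 1) → k)) (hp : LinearIndependent k p) :
    Module.finrank k (quadricsSingularAtPoints k n r p) = Nat.choose (n - r + 2) 2 ∧
    (Nat.choose (n - r + 2) 2 : ℤ) =
      Nat.choose (n + 2) 2 - r * (n + 1) + (r : ℤ) * (r - 1) / 2 ∧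
    0 < (r : ℤ) * (r - 1) / 2 := by
  have hchoose : (r : ℤ) * (r - 1) / 2 = r.choose 2 := by
    rw [← two_mul_natCast_choose_two, Int.mul_ediv_cancel_left _ two_ne_zero]
  refine ⟨?_, ?_, ?_⟩
  · rw [finrank_quadricsSingularAtPoints hp, show n + 1 - r + 1 = n - r + 2 by omega]
  · rw [hchoose, natCast_choose_sub_add_two hrn]
  · rw [hchoose]
    exact_mod_cast Nat.choose_pos hr

theorem stmt0 (k : Type*) [Field k] [CharZero k] (n r : ℕ)
    (hn : 2 ≤ n) (hr : 2 ≤ r) (hrn : r ≤ n)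
    (p : Fin r → (Fin (n + 1) → k)) (hp : LinearIndependent k p) :
    Module.finrank k (quadricsSingularAtPoints k n r p) = Nat.choose (n - r + 2) 2 ∧
    (Nat.choose (n - r + 2) 2 : ℤ) =
      Nat.choose (n + 2) 2 - r * (n + 1) + (r : ℤ) * (r - 1) / 2 ∧
    0 < (r : ℤ) * (r - 1) / 2 :=
  stmt0_general k n r hr hrn p hp
end

section
/- Let k be any field and let p_1, …, p_9 be any nine points of k^4. Then there exists a nonzero homogeneous polynomial F of degree 4 in k[x_0, x_1, x_2, x_3] such that F(p_i) = 0 and all first-order partial derivatives of F vanish at each p_i. (Consequently the system of quartic surfaces in P^3 with nine assigned double points is nonempty although its virtual affine dimension is binomial(7,3) − 9·4 = −1; this is the Alexander–Hirschowitz case (d, n, r) = (4, 3, 9). One can take F = Q^2 where Q is a nonzero quadric through the nine points.) -/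
open MvPolynomial

private noncomputable def eS : {q : Fin 4 × Fin 4 // q.1 ≤ q.2} → (Fin 4 →₀ ℕ) :=
  fun q => Finsupp.single q.1.1 1 + Finsupp.single q.1.2 1

private lemma pair_eq {a b c d : Fin 4} (hab : a ≤ b) (hcd : c ≤ d)
    (h : Finsupp.single a 1 + Finsupp.single b 1
        = Finsupp.single c 1 + Finsupp.single d 1) :
    a = c ∧ b = d := by
  have h2 : ({a} : Multiset (Fin 4)) + {b} = {c} + {d} := by
    have := congrArg Finsupp.toMultiset h
    simpa [Finsupp.toMultiset_add, Finsupp.toMultiset_single] using this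
  rw [Multiset.singleton_add, Multiset.singleton_add, Multiset.cons_eq_cons] at h2
  rcases h2 with ⟨h1, h2⟩ | ⟨hne, cs, h1, h2⟩
  · exact ⟨h1, by simpa using h2⟩
  · have hcs : cs = 0 := by
      have := congrArg Multiset.card h1
      simpa using this
    subst hcs
    simp only [Multiset.cons_zero, Multiset.singleton_inj] at h1 h2
    subst h1; subst h2
    exact absurd (le_antisymm hab hcd) hne

private lemma eS_inj : Function.Injective eS := by
  rintro ⟨⟨a, b⟩, hab⟩ ⟨⟨c, d⟩, hcd⟩ h
  obtain ⟨h1, h2⟩ := pair_eq hab hcd h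
  subst h1; subst h2; rfl

private lemma eS_deg (q : {q : Fin 4 × Fin 4 // q.1 ≤ q.2}) :
    (eS q).sum (fun _ e => e) = 2 := by
  unfold eS
  rw [Finsupp.sum_add_index' (fun _ => rfl) (fun _ _ _ => rfl),
    Finsupp.sum_single_index rfl, Finsupp.sum_single_index rfl]

theorem stmt5 (k : Type*) [Field k] (p : Fin 9 → (Fin 4 → k)) :
    ∃ F : MvPolynomial (Fin 4) k, F ≠ 0 ∧ F.IsHomogeneous 4 ∧
      ∀ i, eval (p i) F = 0 ∧ ∀ j, eval (p i) (pderiv j F) = 0 := by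
  classical
  -- the linear map sending coefficients to the quadric
  let T : ({q : Fin 4 × Fin 4 // q.1 ≤ q.2} → k) →ₗ[k] MvPolynomial (Fin 4) k :=
    ∑ q : {q : Fin 4 × Fin 4 // q.1 ≤ q.2}, (monomial (eS q)).comp (LinearMap.proj q)
  have hT : ∀ c, T c = ∑ q : {q : Fin 4 × Fin 4 // q.1 ≤ q.2}, monomial (eS q) (c q) := by
    intro c
    simp [T, LinearMap.sum_apply]
  -- evaluation at the nine points
  let ψ : ({q : Fin 4 × Fin 4 // q.1 ≤ q.2} → k) →ₗ[k] (Fin 9 → k) :=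
    LinearMap.pi (fun i => (aeval (p i)).toLinearMap.comp T)
  have hcard : Fintype.card {q : Fin 4 × Fin 4 // q.1 ≤ q.2} = 10 := by decide
  have hni : ¬ Function.Injective ψ := by
    intro h
    have h1 := LinearMap.finrank_le_finrank_of_injective h
    rw [Module.finrank_pi, Module.finrank_pi, hcard] at h1
    simp at h1
  rw [Function.not_injective_iff] at hni
  obtain ⟨a, b, hab, hne⟩ := hni
  set c := a - b with hc
  have hc0 : c ≠ 0 := sub_ne_zero.mpr hne
  have hψc : ψ c = 0 := by rw [hc, map_sub, hab, sub_self]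
  set Q : MvPolynomial (Fin 4) k := T c with hQdef
  -- Q is nonzero
  have hQ0 : Q ≠ 0 := by
    obtain ⟨q0, hq0⟩ : ∃ q0, c q0 ≠ 0 := by
      by_contra hcon
      push_neg at hcon
      exact hc0 (funext hcon)
    intro hQz
    have hco : coeff (eS q0) Q = c q0 := by
      rw [hQdef, hT, coeff_sum]
      have key : ∀ q : {q : Fin 4 × Fin 4 // q.1 ≤ q.2},
          coeff (eS q0) (monomial (eS q) (c q)) = if q = q0 then c q else 0 := by
        intro q
        rw [coeff_monomial]
        simp [eS_inj.eq_iff]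
      simp only [key]
      simp
    rw [hQz] at hco
    simp at hco
    exact hq0 hco.symm
  -- Q is homogeneous of degree 2
  have hQh : Q.IsHomogeneous 2 := by
    rw [hQdef, hT]
    apply IsHomogeneous.sum
    intro q _
    exact isHomogeneous_monomial _ (eS_deg q)
  -- Q vanishes at the points
  have hQev : ∀ i, eval (p i) Q = 0 := by
    intro i
    have h := congrFun hψc i
    simp only [ψ, LinearMap.pi_apply, LinearMap.comp_apply, AlgHom.toLinearMap_apply,
      Pi.zero_apply] at h
    have he : eval (p i) Q = aeval (p i) Q := by rw [← coe_aeval_eq_eval]; rfl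
    rw [he]
    exact h
  refine ⟨Q * Q, mul_ne_zero hQ0 hQ0, hQh.mul hQh, fun i => ⟨?_, fun j => ?_⟩⟩
  · rw [map_mul, hQev i, mul_zero]
  · rw [pderiv_mul, map_add, map_mul, map_mul, hQev i, mul_zero, zero_mul, add_zero]
end
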